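/- arXiv:2411.07779 — 8 statements merged into one kernel-verified Lean document; each statement's English description precedes it below -/
import Mathlib

section
/- Let N ≥ 1 be an integer and 𝐭 = (k₀,ℓ₀,…,k_{N-1},ℓ_{N-1}) ∈ ℕ̄₊^{2N}. Then in R one has γ_𝐭 = Σ_{τ ∈ {0,1}^{2N}} (−1)^{|τ|₁} α^{τ·𝐭ₑ} β^{τ·𝐭ₒ} Σ_{j=0}^{|τ|₁₀} binom(|τ|₁₀, j) (−1)^j 𝔟_{N−j}, where 𝔟_m = (αβ·(1−α)⁻¹(1−β)⁻¹)^m ∈ R. -/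
open MvPowerSeries Finset

noncomputable section

/-- The ring `R = ℂ[[α,β]]` of formal power series in two commuting variables. -/
abbrev R2 : Type := MvPowerSeries (Fin 2) ℂ

/-- The variable `α`. -/
def pa : R2 := MvPowerSeries.X 0
/-- The variable `β`. -/
def pb : R2 := MvPowerSeries.X 1

/-- The matrix `A₀ = [[1,0],[α,β]]`. -/
def A0 : Matrix (Fin 2) (Fin 2) R2 := !![1, 0; pa, pb]
/-- The matrix `A₁ = [[α,β],[0,1]]`. -/
def A1 : Matrix (Fin 2) (Fin 2) R2 := !![pa, pb; 0, 1]
/-- The matrix `A₀^∞ = [[1,0],[α(1−β)⁻¹,0]]`. -/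
def A0inf : Matrix (Fin 2) (Fin 2) R2 := !![1, 0; pa * (1 - pb)⁻¹, 0]
/-- The matrix `A₁^∞ = [[0,β(1−α)⁻¹],[0,1]]`. -/
def A1inf : Matrix (Fin 2) (Fin 2) R2 := !![0, pb * (1 - pa)⁻¹; 0, 1]

/-- Extended power: `A^k` for `k ∈ ℕ`, and `Ainf` for `k = ∞`. -/
def powE (A Ainf : Matrix (Fin 2) (Fin 2) R2) : ℕ∞ → Matrix (Fin 2) (Fin 2) R2 :=
  fun k => WithTop.recTopCoe Ainf (fun n => A ^ n) k

/-- `M(𝐭) = A₁^{k₀} A₀^{ℓ₀} ⋯ A₁^{k_{N-1}} A₀^{ℓ_{N-1}}`, where the extended binary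
expansion `𝐭 = (k₀,ℓ₀,…,k_{N-1},ℓ_{N-1})` is encoded as `t : Fin (2*N) → ℕ∞`
(`k_j = t (2j)`, `ℓ_j = t (2j+1)`). -/
def Mmat {N : ℕ} (t : Fin (2 * N) → ℕ∞) : Matrix (Fin 2) (Fin 2) R2 :=
  ((List.finRange N).map (fun j =>
    powE A1 A1inf (t ⟨2 * j.val, by have := j.isLt; omega⟩) *
    powE A0 A0inf (t ⟨2 * j.val + 1, by have := j.isLt; omega⟩))).prod

/-- `γ_𝐭`, the (1,1) entry of `M(𝐭)`. -/
def gam {N : ℕ} (t : Fin (2 * N) → ℕ∞) : R2 := Mmat t 0 0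

/-- `x^e` for `e ∈ ℕ̄`, with the convention `x^∞ = 0`. -/
def xpowE (x : R2) : ℕ∞ → R2 := fun e => WithTop.recTopCoe 0 (fun n => x ^ n) e

/-- Inner product `τ·𝐭` computed in `ℕ̄ = ℕ ∪ {∞}` (`0·∞ = 0`, `a+∞ = ∞`). -/
def dotE {M : ℕ} (τ : Fin M → Bool) (t : Fin M → ℕ∞) : ℕ∞ :=
  ∑ i, if τ i then t i else 0

/-- `𝐭ₑ = (k₀,0,k₁,0,…,k_{N-1},0)`. -/
def tev {M : ℕ} (t : Fin M → ℕ∞) : Fin M → ℕ∞ := fun i => if i.val % 2 = 0 then t i else 0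
/-- `𝐭ₒ = (0,ℓ₀,0,ℓ₁,…,0,ℓ_{N-1})`. -/
def tod {M : ℕ} (t : Fin M → ℕ∞) : Fin M → ℕ∞ := fun i => if i.val % 2 = 1 then t i else 0

/-- Extension of `τ : Fin M → Bool` to `ℕ` by `false`. -/
def extB {M : ℕ} (τ : Fin M → Bool) : ℕ → Bool :=
  fun n => if h : n < M then τ ⟨n, h⟩ else false

/-- `|τ|₁ = #{0 ≤ j < M : τ_j = 1}`. -/
def wt1 {M : ℕ} (τ : Fin M → Bool) : ℕ := (Finset.univ.filter (fun i => τ i = true)).card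

/-- `|τ|₁₀ = #{0 ≤ j < M−1 : (τ_j,τ_{j+1}) = (1,0)}`. -/
def wt10 {M : ℕ} (τ : Fin M → Bool) : ℕ :=
  ((Finset.range (M - 1)).filter (fun j => extB τ j = true ∧ extB τ (j + 1) = false)).card

/-!
`A₁ = P₁ + α Q₁` and `A₀ = P₀ + β Q₀` for complementary rank-one idempotents `P, Q`, so
`A₁^k = P₁ + α^k Q₁` and `A₀^ℓ = P₀ + β^ℓ Q₀`; since `A₁^∞ = P₁` and `A₀^∞ = P₀`, this also holds
for infinite exponents with `α^∞ = β^∞ = 0`. Expanding `M(𝐭)` gives a sum over `τ ∈ {0,1}^{2N}`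
(`τ_j = 1` selects the `Q`-term) of `α^{τ·𝐭ₑ} β^{τ·𝐭ₒ}` times a product of rank-one matrices,
whose `(1,1)` entry is a product of pairings of consecutive eigenvectors. Read two positions
at a time, these pairings contribute a sign for each `1` of `τ`, a factor `𝔟₁ - 1` for each
descent `(1,0)` and a factor `𝔟₁` otherwise, so the entry is
`(-1)^{|τ|₁} 𝔟₁^{N-|τ|₁₀} (𝔟₁ - 1)^{|τ|₁₀}`; the binomial theorem expands the last power.
-/

namespace GammaDecomposition

open Matrix

theorem pow_add_smul_one_sub_of_isIdempotentElem {S A : Type*} [CommSemiring S] [Ring A]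
    [Algebra S A] {P : A} (hP : IsIdempotentElem P) (c : S) (n : ℕ) :
    (P + c • (1 - P)) ^ n = P + c ^ n • (1 - P) := by
  have hPQ : P * (1 - P) = 0 := by rw [mul_sub, mul_one, hP.eq, sub_self]
  have hQP : (1 - P) * P = 0 := by rw [sub_mul, one_mul, hP.eq, sub_self]
  induction n with
  | zero => simp
  | succ n ih =>
    rw [pow_succ, ih, add_mul, mul_add, mul_add, smul_mul_smul_comm, mul_smul_comm, smul_mul_assoc,
      hP.eq, hPQ, hQP, hP.one_sub.eq, pow_succ]
    simp

lemma one_sub_pa_mul_inv : (1 - pa) * (1 - pa)⁻¹ = 1 :=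
  MvPowerSeries.mul_inv_cancel _ (by simp [pa])

lemma one_sub_pb_mul_inv : (1 - pb) * (1 - pb)⁻¹ = 1 :=
  MvPowerSeries.mul_inv_cancel _ (by simp [pb])

/- Throughout, `k = true` refers to `A₁` (eigenvalues `1`, `α`) and `k = false` to `A₀`
(eigenvalues `1`, `β`); `b = false` selects the eigenvalue `1`. The rows `eigRow k` are the
basis dual to the columns `eigCol k`. -/
def eigVal : Bool → R2
  | true => pa
  | false => pb

def eigCol : Bool → Bool → Fin 2 → R2
  | true, false => ![pb * (1 - pa)⁻¹, 1]
  | true, true => ![1, 0]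
  | false, false => ![1, pa * (1 - pb)⁻¹]
  | false, true => ![0, 1]

def eigRow : Bool → Bool → Fin 2 → R2
  | true, false => ![0, 1]
  | true, true => ![1, -(pb * (1 - pa)⁻¹)]
  | false, false => ![1, 0]
  | false, true => ![-(pa * (1 - pb)⁻¹), 1]

def eigProj (k b : Bool) : Matrix (Fin 2) (Fin 2) R2 := vecMulVec (eigCol k b) (eigRow k b)

lemma isIdempotentElem_eigProj (k b : Bool) : IsIdempotentElem (eigProj k b) := by
  cases k <;> cases b <;> ext i j : 1 <;> fin_cases i <;> fin_cases j <;>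
    simp [eigProj, eigCol, eigRow, mul_apply, vecMulVec_apply]

lemma eigProj_true (k : Bool) : eigProj k true = 1 - eigProj k false := by
  cases k <;> ext i j : 1 <;> fin_cases i <;> fin_cases j <;>
    simp [eigProj, eigCol, eigRow, vecMulVec_apply]

lemma A1inf_eq : A1inf = eigProj true false := by
  ext i j : 1
  fin_cases i <;> fin_cases j <;> simp [A1inf, eigProj, eigCol, eigRow, vecMulVec_apply]

lemma A0inf_eq : A0inf = eigProj false false := by
  ext i j : 1
  fin_cases i <;> fin_cases j <;> simp [A0inf, eigProj, eigCol, eigRow, vecMulVec_apply]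

lemma A1_eq : A1 = eigProj true false + pa • eigProj true true := by
  ext i j : 1
  fin_cases i <;> fin_cases j <;> simp [A1, eigProj, eigCol, eigRow]
  linear_combination (-pb) * one_sub_pa_mul_inv

lemma A0_eq : A0 = eigProj false false + pb • eigProj false true := by
  ext i j : 1
  fin_cases i <;> fin_cases j <;> simp [A0, eigProj, eigCol, eigRow]
  linear_combination (-pa) * one_sub_pb_mul_inv

@[simp] lemma powE_top (A Ainf : Matrix (Fin 2) (Fin 2) R2) : powE A Ainf ⊤ = Ainf := rfl

@[simp] lemma powE_coe (A Ainf : Matrix (Fin 2) (Fin 2) R2) (n : ℕ) : powE A Ainf n = A ^ n :=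
  rfl

@[simp] lemma xpowE_top (x : R2) : xpowE x ⊤ = 0 := rfl

@[simp] lemma xpowE_coe (x : R2) (n : ℕ) : xpowE x n = x ^ n := rfl

@[simp] lemma xpowE_zero (x : R2) : xpowE x 0 = 1 := rfl

lemma xpowE_add (x : R2) (e f : ℕ∞) : xpowE x (e + f) = xpowE x e * xpowE x f := by
  induction e using ENat.recTopCoe with
  | top => simp
  | coe n =>
    induction f using ENat.recTopCoe with
    | top => simp
    | coe m => rw [← Nat.cast_add, xpowE_coe, xpowE_coe, xpowE_coe, pow_add]

lemma xpowE_sum {ι : Type*} (x : R2) (s : Finset ι) (f : ι → ℕ∞) :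
    xpowE x (∑ i ∈ s, f i) = ∏ i ∈ s, xpowE x (f i) := by
  classical
  induction s using Finset.induction_on with
  | empty => simp
  | insert i s hi ih => rw [sum_insert hi, prod_insert hi, xpowE_add, ih]

def factorPow : Bool → ℕ∞ → Matrix (Fin 2) (Fin 2) R2
  | true => powE A1 A1inf
  | false => powE A0 A0inf

lemma factorPow_eq (k : Bool) (e : ℕ∞) :
    factorPow k e = eigProj k false + xpowE (eigVal k) e • eigProj k true := by
  induction e using ENat.recTopCoe with
  | top => cases k <;> simp [factorPow, A1inf_eq, A0inf_eq]
  | coe n =>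
    cases k <;> simp only [factorPow, powE_coe, xpowE_coe, A0_eq, A1_eq, eigProj_true] <;>
      exact pow_add_smul_one_sub_of_isIdempotentElem (isIdempotentElem_eigProj _ _) _ n

lemma list_prod_map_range_succ {M : Type*} [Monoid M] (f : ℕ → M) (n : ℕ) :
    ((List.range (n + 1)).map f).prod = ((List.range n).map f).prod * f n := by
  simp [List.range_succ]

lemma list_prod_map_range_two_mul {M : Type*} [Monoid M] (f : ℕ → M) (n : ℕ) :
    ((List.range n).map fun i => f (2 * i) * f (2 * i + 1)).prod =
      ((List.range (2 * n)).map f).prod := by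
  induction n with
  | zero => simp
  | succ n ih =>
    rw [list_prod_map_range_succ, ih, show 2 * (n + 1) = 2 * n + 1 + 1 by ring,
      list_prod_map_range_succ, list_prod_map_range_succ, mul_assoc]

lemma list_prod_map_range_smul {S A : Type*} [CommSemiring S] [Semiring A] [Algebra S A]
    (c : ℕ → S) (X : ℕ → A) (m : ℕ) :
    ((List.range m).map fun j => c j • X j).prod =
      (∏ j ∈ range m, c j) • ((List.range m).map X).prod := by
  induction m with
  | zero => simp
  | succ m ih =>
    rw [list_prod_map_range_succ, list_prod_map_range_succ, ih, prod_range_succ,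
      smul_mul_smul_comm]

lemma list_prod_map_range_vecMulVec {n R : Type*} [Fintype n] [DecidableEq n] [CommSemiring R]
    (u v : ℕ → n → R) (m : ℕ) :
    ((List.range (m + 1)).map fun j => vecMulVec (u j) (v j)).prod =
      (∏ j ∈ range m, v j ⬝ᵥ u (j + 1)) • vecMulVec (u 0) (v m) := by
  induction m with
  | zero => simp
  | succ m ih =>
    rw [list_prod_map_range_succ, ih, smul_mul_assoc, vecMulVec_mul_vecMulVec, vecMulVec_smul,
      smul_smul, prod_range_succ]

lemma extB_snoc_of_lt {M : ℕ} (σ : Fin M → Bool) (b : Bool) {j : ℕ} (hj : j < M) :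
    extB (Fin.snoc σ b : Fin (M + 1) → Bool) j = extB σ j := by
  simp [extB, Fin.snoc, hj, Nat.lt_succ_of_lt hj]

lemma extB_snoc_self {M : ℕ} (σ : Fin M → Bool) (b : Bool) :
    extB (Fin.snoc σ b : Fin (M + 1) → Bool) M = b := by
  simp [extB, Fin.snoc]

theorem list_prod_map_range_add {A : Type*} [Semiring A] (P : ℕ → Bool → A) (M : ℕ) :
    ((List.range M).map fun j => P j false + P j true).prod =
      ∑ τ : Fin M → Bool, ((List.range M).map fun j => P j (extB τ j)).prod := by
  induction M with
  | zero => simp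
  | succ M ih =>
    rw [list_prod_map_range_succ, ih, sum_mul, ← (Fin.snocEquiv fun _ => Bool).sum_comp,
      Fintype.sum_prod_type, Finset.sum_comm]
    refine sum_congr rfl fun σ _ => ?_
    have hprefix (b : Bool) :
        ((List.range M).map fun j => P j (extB (Fin.snoc σ b : Fin (M + 1) → Bool) j)) =
          (List.range M).map fun j => P j (extB σ j) :=
      List.map_congr_left fun j hj => by rw [extB_snoc_of_lt σ b (List.mem_range.mp hj)]
    simp only [Fin.snocEquiv, Equiv.coe_fn_mk, Fintype.sum_bool, list_prod_map_range_succ, hprefix,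
      extB_snoc_self, mul_add, add_comm]

/-- Position `j` of `𝐭` carries an exponent of `A₁` (`k_{j/2}`) iff `j` is even. -/
def isA1Pos (j : ℕ) : Bool := decide (j % 2 = 0)

lemma isA1Pos_succ (j : ℕ) : isA1Pos (j + 1) = !isA1Pos j := by
  rcases Nat.mod_two_eq_zero_or_one j with h | h <;>
    simp [isA1Pos, Nat.succ_mod_two_eq_zero_iff, h]

lemma isA1Pos_two_mul (n : ℕ) : isA1Pos (2 * n) = true := by simp [isA1Pos]

def extT {M : ℕ} (t : Fin M → ℕ∞) : ℕ → ℕ∞ := fun n => if h : n < M then t ⟨n, h⟩ else 0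

lemma Mmat_eq_list_prod {N : ℕ} (t : Fin (2 * N) → ℕ∞) :
    Mmat t = ((List.range (2 * N)).map fun j => factorPow (isA1Pos j) (extT t j)).prod := by
  rw [← list_prod_map_range_two_mul, ← List.map_coe_finRange_eq_range, List.map_map, Mmat]
  congr 2
  funext i
  have h1 : 2 * i.val + 1 < 2 * N := by omega
  simp [extT, isA1Pos, factorPow, h1, Nat.add_mod]

lemma dotE_eq_sum_range {M : ℕ} (τ : Fin M → Bool) (s : Fin M → ℕ∞) :
    dotE τ s = ∑ j ∈ range M, if extB τ j then extT s j else 0 := by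
  rw [dotE, ← Fin.sum_univ_eq_sum_range]
  simp [extB, extT]

lemma extT_tev {M : ℕ} (t : Fin M → ℕ∞) (j : ℕ) :
    extT (tev t) j = if isA1Pos j then extT t j else 0 := by
  by_cases hj : j < M <;> simp [extT, tev, isA1Pos, hj]

lemma extT_tod {M : ℕ} (t : Fin M → ℕ∞) (j : ℕ) :
    extT (tod t) j = if isA1Pos j then 0 else extT t j := by
  rcases Nat.mod_two_eq_zero_or_one j with h | h <;> simp [extT, tod, isA1Pos, h]

lemma prod_xpowE_eigVal {M : ℕ} (τ : Fin M → Bool) (t : Fin M → ℕ∞) :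
    ∏ j ∈ range M, xpowE (eigVal (isA1Pos j)) (if extB τ j then extT t j else 0) =
      xpowE pa (dotE τ (tev t)) * xpowE pb (dotE τ (tod t)) := by
  rw [dotE_eq_sum_range, dotE_eq_sum_range, xpowE_sum, xpowE_sum, ← prod_mul_distrib]
  refine prod_congr rfl fun j _ => ?_
  rw [extT_tev, extT_tod]
  cases isA1Pos j <;> cases extB τ j <;> simp [eigVal]

def eigChain (s : ℕ → Bool) (m : ℕ) : R2 :=
  ∏ j ∈ range m, eigRow (isA1Pos j) (s j) ⬝ᵥ eigCol (isA1Pos (j + 1)) (s (j + 1))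

lemma Mmat_eq_sum {N : ℕ} (hN : 1 ≤ N) (t : Fin (2 * N) → ℕ∞) :
    Mmat t = ∑ τ : Fin (2 * N) → Bool,
      (xpowE pa (dotE τ (tev t)) * xpowE pb (dotE τ (tod t)) * eigChain (extB τ) (2 * N - 1)) •
        vecMulVec (eigCol true (extB τ 0)) (eigRow false (extB τ (2 * N - 1))) := by
  let P (j : ℕ) (b : Bool) : Matrix (Fin 2) (Fin 2) R2 :=
    xpowE (eigVal (isA1Pos j)) (if b then extT t j else 0) • eigProj (isA1Pos j) b
  have hfactor (j : ℕ) : factorPow (isA1Pos j) (extT t j) = P j false + P j true := by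
    simp [P, factorPow_eq]
  have hrange : List.range (2 * N) = List.range (2 * N - 1 + 1) := by congr 1; omega
  have hlast : isA1Pos (2 * N - 1) = false := by simp [isA1Pos]; omega
  simp_rw [Mmat_eq_list_prod, hfactor, list_prod_map_range_add]
  refine sum_congr rfl fun τ _ => ?_
  rw [list_prod_map_range_smul, prod_xpowE_eigVal, hrange]
  simp only [eigProj]
  rw [list_prod_map_range_vecMulVec, smul_smul, hlast]
  rfl

def 𝔟 : R2 := pa * pb * ((1 - pa)⁻¹ * (1 - pb)⁻¹)

def numOnes (s : ℕ → Bool) (m : ℕ) : ℕ := ((range m).filter fun j => s j = true).card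

def numDescents (s : ℕ → Bool) (m : ℕ) : ℕ :=
  ((range m).filter fun j => s j = true ∧ s (j + 1) = false).card

lemma numOnes_succ (s : ℕ → Bool) (m : ℕ) :
    numOnes s (m + 1) = numOnes s m + (s m).toNat := by
  cases h : s m <;> simp [numOnes, range_add_one, filter_insert, h]

lemma numDescents_succ (s : ℕ → Bool) (m : ℕ) :
    numDescents s (m + 1) = numDescents s m + (s m && !s (m + 1)).toNat := by
  cases h : s m <;> cases h' : s (m + 1) <;>
    simp [numDescents, range_add_one, filter_insert, h, h']

lemma wt1_eq_numOnes {M : ℕ} (τ : Fin M → Bool) : wt1 τ = numOnes (extB τ) M := by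
  rw [wt1, numOnes, card_filter, card_filter, ← Fin.sum_univ_eq_sum_range]
  simp [extB]

lemma eigChain_add_two (s : ℕ → Bool) (n : ℕ) :
    eigChain s (2 * n + 3) = eigChain s (2 * n + 1) *
      (eigRow false (s (2 * n + 1)) ⬝ᵥ eigCol true (s (2 * n + 2))) *
        (eigRow true (s (2 * n + 2)) ⬝ᵥ eigCol false (s (2 * n + 3))) := by
  rw [eigChain, eigChain, show 2 * n + 3 = 2 * n + 1 + 1 + 1 by ring, prod_range_succ,
    prod_range_succ]
  simp only [isA1Pos_succ, isA1Pos_two_mul, Bool.not_true, Bool.not_false]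

lemma eigCol_mul_pairing_mul_eigRow (a b : Bool) :
    eigCol true a 0 * (eigRow true a ⬝ᵥ eigCol false b) * eigRow false b 0 =
      (-1) ^ (a.toNat + b.toNat) * 𝔟 ^ (1 - (a && !b).toNat) * (𝔟 - 1) ^ (a && !b).toNat := by
  cases a <;> cases b <;>
    simp only [eigCol, eigRow, dotProduct, Fin.sum_univ_two, cons_val_zero, cons_val_one, 𝔟,
      Bool.toNat_true, Bool.toNat_false, Bool.not_true, Bool.not_false, Bool.and_true,
      Bool.and_false, Nat.reduceAdd, Nat.reduceSub] <;>
    ring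

lemma pairing_mul_pairing_mul_eigRow (z a c : Bool) :
    (eigRow false z ⬝ᵥ eigCol true a) * (eigRow true a ⬝ᵥ eigCol false c) * eigRow false c 0 =
      (-1) ^ (a.toNat + c.toNat) * 𝔟 ^ (1 - ((z && !a).toNat + (a && !c).toNat)) *
        (𝔟 - 1) ^ ((z && !a).toNat + (a && !c).toNat) * eigRow false z 0 := by
  cases z <;> cases a <;> cases c <;>
    simp only [eigCol, eigRow, dotProduct, Fin.sum_univ_two, cons_val_zero, cons_val_one, 𝔟,
      Bool.toNat_true, Bool.toNat_false, Bool.not_true, Bool.not_false, Bool.and_true,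
      Bool.and_false, Nat.reduceAdd, Nat.reduceSub] <;>
    ring

lemma eigChain_corner_eq (s : ℕ → Bool) (n : ℕ) :
    numDescents s (2 * n + 1) ≤ n + 1 ∧
      eigCol true (s 0) 0 * eigChain s (2 * n + 1) * eigRow false (s (2 * n + 1)) 0 =
        (-1) ^ numOnes s (2 * (n + 1)) * 𝔟 ^ (n + 1 - numDescents s (2 * n + 1)) *
          (𝔟 - 1) ^ numDescents s (2 * n + 1) := by
  induction n with
  | zero =>
    have hd : numDescents s 1 = (s 0 && !s 1).toNat := by
      simpa [numDescents] using numDescents_succ s 0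
    have ho : numOnes s 2 = (s 0).toNat + (s 1).toNat := by
      rw [show 2 = 0 + 1 + 1 from rfl, numOnes_succ, numOnes_succ]
      simp [numOnes]
    refine ⟨by rw [hd]; exact Bool.toNat_le _, ?_⟩
    rw [hd, ho, ← eigCol_mul_pairing_mul_eigRow]
    simp [eigChain, isA1Pos]
  | succ n ih =>
    obtain ⟨hle, ih⟩ := ih
    set z := s (2 * n + 1)
    set a := s (2 * n + 2)
    set c := s (2 * n + 3)
    set d := (z && !a).toNat + (a && !c).toNat
    have hd : numDescents s (2 * n + 3) = numDescents s (2 * n + 1) + d := by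
      rw [show 2 * n + 3 = 2 * n + 1 + 1 + 1 by ring, numDescents_succ, numDescents_succ]
      ring
    have ho : numOnes s (2 * (n + 1 + 1)) = numOnes s (2 * (n + 1)) + (a.toNat + c.toNat) := by
      rw [show 2 * (n + 1 + 1) = 2 * (n + 1) + 1 + 1 by ring, numOnes_succ, numOnes_succ,
        add_assoc]
      rfl
    -- two consecutive descents would need a position that is both `0` and `1`
    have hd1 : d ≤ 1 :=
      (by decide : ∀ z a c : Bool, (z && !a).toNat + (a && !c).toNat ≤ 1) z a c
    rw [show 2 * (n + 1) + 1 = 2 * n + 3 by ring]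
    refine ⟨by omega, ?_⟩
    calc eigCol true (s 0) 0 * eigChain s (2 * n + 3) * eigRow false c 0
        = eigCol true (s 0) 0 * eigChain s (2 * n + 1) *
            ((eigRow false z ⬝ᵥ eigCol true a) * (eigRow true a ⬝ᵥ eigCol false c) *
              eigRow false c 0) := by rw [eigChain_add_two]; ring
      _ = eigCol true (s 0) 0 * eigChain s (2 * n + 1) * eigRow false z 0 *
            ((-1) ^ (a.toNat + c.toNat) * 𝔟 ^ (1 - d) * (𝔟 - 1) ^ d) := by
        rw [pairing_mul_pairing_mul_eigRow]; ring
      _ = _ := by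
        rw [ih, ho, hd, show n + 1 + 1 - (numDescents s (2 * n + 1) + d) =
          n + 1 - numDescents s (2 * n + 1) + (1 - d) by omega]
        ring

lemma sum_choose_mul_neg_one_pow_mul_pow {R : Type*} [CommRing R] (x : R) {w m : ℕ}
    (h : w ≤ m) :
    ∑ j ∈ range (w + 1), (w.choose j : R) * (-1) ^ j * x ^ (m - j) =
      x ^ (m - w) * (x - 1) ^ w := by
  rw [sub_eq_neg_add, add_pow, mul_sum]
  refine sum_congr rfl fun j hj => ?_
  rw [show m - j = m - w + (w - j) by have := mem_range.mp hj; omega, pow_add]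
  ring

end GammaDecomposition

theorem gamma_component_decomposition_alt_general (N : ℕ) (hN : 1 ≤ N)
    (t : Fin (2 * N) → ℕ∞) :
    gam t =
      ∑ τ : Fin (2 * N) → Bool,
        (-1 : R2) ^ wt1 τ * xpowE pa (dotE τ (tev t)) * xpowE pb (dotE τ (tod t)) *
          ∑ j ∈ Finset.range (wt10 τ + 1),
            (((wt10 τ).choose j : ℕ) : R2) * (-1 : R2) ^ j *
              (pa * pb * ((1 - pa)⁻¹ * (1 - pb)⁻¹)) ^ (N - j) := by
  obtain ⟨n, rfl⟩ : ∃ n, N = n + 1 := ⟨N - 1, by omega⟩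
  have hlast : 2 * (n + 1) - 1 = 2 * n + 1 := by omega
  rw [gam, GammaDecomposition.Mmat_eq_sum hN, Matrix.sum_apply]
  refine sum_congr rfl fun τ _ => ?_
  obtain ⟨hle, hcorner⟩ := GammaDecomposition.eigChain_corner_eq (extB τ) n
  have hwt10 : wt10 τ = GammaDecomposition.numDescents (extB τ) (2 * n + 1) := by
    rw [wt10, hlast]; rfl
  rw [Matrix.smul_apply, Matrix.vecMulVec_apply, smul_eq_mul, hlast,
    GammaDecomposition.wt1_eq_numOnes, hwt10,
    show pa * pb * ((1 - pa)⁻¹ * (1 - pb)⁻¹) = GammaDecomposition.𝔟 from rfl,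
    GammaDecomposition.sum_choose_mul_neg_one_pow_mul_pow _ hle]
  linear_combination xpowE pa (dotE τ (tev t)) * xpowE pb (dotE τ (tod t)) * hcorner

/-- **Proposition (alternative component decomposition).**
For `N ≥ 1` and `𝐭 ∈ ℕ̄₊^{2N}`,
`γ_𝐭 = Σ_{τ ∈ {0,1}^{2N}} (−1)^{|τ|₁} α^{τ·𝐭ₑ} β^{τ·𝐭ₒ}
  Σ_{j=0}^{|τ|₁₀} C(|τ|₁₀, j) (−1)^j 𝔟_{N−j}`,
where `𝔟_m = (αβ(1−α)⁻¹(1−β)⁻¹)^m`. -/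
theorem gamma_component_decomposition_alt (N : ℕ) (hN : 1 ≤ N)
    (t : Fin (2 * N) → ℕ∞) (ht : ∀ i, t i ≠ 0) :
    gam t =
      ∑ τ : Fin (2 * N) → Bool,
        (-1 : R2) ^ wt1 τ * xpowE pa (dotE τ (tev t)) * xpowE pb (dotE τ (tod t)) *
          ∑ j ∈ Finset.range (wt10 τ + 1),
            (((wt10 τ).choose j : ℕ) : R2) * (-1 : R2) ^ j *
              (pa * pb * ((1 - pa)⁻¹ * (1 - pb)⁻¹)) ^ (N - j) :=
  gamma_component_decomposition_alt_general N hN t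
end
end

section
/- Let N ≥ 1, let 𝐤 = (k₀,…,k_{N-1}) ∈ ℕ̄₊^{N}, and let ℓ₀ = ⋯ = ℓ_{N-1} = ∞. Then for every permutation σ of {0,…,N−1}, writing σ𝐤 = (k_{σ⁻¹(0)},…,k_{σ⁻¹(N-1)}), one has the identity of formal power series γ_{𝐤∗𝓵} = γ_{σ𝐤∗𝓵}, where 𝓵 = (∞,…,∞) ∈ ℕ̄₊^{N}. -/
open MvPowerSeries Finset

noncomputable section

/-- Interleaving `𝐤∗𝓵 = (k₀,ℓ₀,k₁,ℓ₁,…,k_{N-1},ℓ_{N-1})`. -/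
def interleave {N : ℕ} (k l : Fin N → ℕ∞) : Fin (2 * N) → ℕ∞ :=
  fun i =>
    if i.val % 2 = 0 then k ⟨i.val / 2, by have := i.isLt; omega⟩
    else l ⟨i.val / 2, by have := i.isLt; omega⟩

/-!
Right multiplication by `A₀^∞` kills the `(0,1)` entry, so with all `ℓ_j = ∞` every block
`A₁^{k_j} A₀^∞` has first row `(c_j, 0)`. On such matrices the `(0,0)` entry is multiplicative,
hence `γ_{𝐤∗𝓵} = ∏ⱼ c_j` is a product in the commutative ring `R`, which does not depend on the
order of the blocks.
-/

namespace Matrix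

variable {α : Type*} [Semiring α]

theorem mul_apply_zero_zero_of_apply_zero_one_eq_zero {X : Matrix (Fin 2) (Fin 2) α}
    (hX : X 0 1 = 0) (Y : Matrix (Fin 2) (Fin 2) α) : (X * Y) 0 0 = X 0 0 * Y 0 0 := by
  simp [mul_apply, Fin.sum_univ_two, hX]

theorem mul_apply_zero_one_eq_zero {X Y : Matrix (Fin 2) (Fin 2) α}
    (hX : X 0 1 = 0) (hY : Y 0 1 = 0) : (X * Y) 0 1 = 0 := by
  simp [mul_apply, Fin.sum_univ_two, hX, hY]

theorem list_prod_apply_zero_zero_of_forall_apply_zero_one_eq_zero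
    (L : List (Matrix (Fin 2) (Fin 2) α)) (hL : ∀ X ∈ L, X 0 1 = 0) :
    L.prod 0 0 = (L.map (· 0 0)).prod ∧ L.prod 0 1 = 0 := by
  induction L with
  | nil => simp
  | cons X L ih =>
    obtain ⟨hX, hL⟩ := List.forall_mem_cons.mp hL
    obtain ⟨ih₀₀, ih₀₁⟩ := ih hL
    rw [List.prod_cons, List.map_cons, List.prod_cons,
      mul_apply_zero_zero_of_apply_zero_one_eq_zero hX, ih₀₀]
    exact ⟨rfl, mul_apply_zero_one_eq_zero hX ih₀₁⟩

end Matrix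

theorem mul_A0inf_apply_zero_one (X : Matrix (Fin 2) (Fin 2) R2) : (X * A0inf) 0 1 = 0 := by
  simp [A0inf, Matrix.mul_apply, Fin.sum_univ_two]

theorem powE_top (A Ainf : Matrix (Fin 2) (Fin 2) R2) : powE A Ainf ⊤ = Ainf := rfl

theorem interleave_two_mul {N : ℕ} (k l : Fin N → ℕ∞) (j : Fin N) (h : 2 * j.val < 2 * N) :
    interleave k l ⟨2 * j.val, h⟩ = k j := by
  simp [interleave]

theorem interleave_two_mul_add_one {N : ℕ} (k l : Fin N → ℕ∞) (j : Fin N)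
    (h : 2 * j.val + 1 < 2 * N) : interleave k l ⟨2 * j.val + 1, h⟩ = l j := by
  simp only [interleave, Nat.mul_add_mod_self_left]
  exact congrArg l (Fin.ext (by simp only; omega))

theorem Mmat_interleave {N : ℕ} (k l : Fin N → ℕ∞) :
    Mmat (interleave k l) =
      ((List.finRange N).map fun j => powE A1 A1inf (k j) * powE A0 A0inf (l j)).prod := by
  simp only [Mmat, interleave_two_mul, interleave_two_mul_add_one]

theorem gam_interleave_top {N : ℕ} (k : Fin N → ℕ∞) :
    gam (interleave k fun _ => ⊤) = ∏ j, (powE A1 A1inf (k j) * A0inf) 0 0 := by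
  have hblocks : ∀ X ∈ (List.finRange N).map (fun j => powE A1 A1inf (k j) * A0inf),
      X 0 1 = 0 := by
    simp only [List.mem_map]
    rintro _ ⟨j, -, rfl⟩
    exact mul_A0inf_apply_zero_one _
  rw [gam, Mmat_interleave, powE_top,
    (Matrix.list_prod_apply_zero_zero_of_forall_apply_zero_one_eq_zero _ hblocks).1,
    List.map_map, Fin.prod_univ_def]
  rfl

theorem gamma_perm_ones_blocks_general (N : ℕ) (k : Fin N → ℕ∞)
    (σ : Equiv.Perm (Fin N)) :
    gam (interleave k (fun _ => (⊤ : ℕ∞))) =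
      gam (interleave (fun j => k (σ.symm j)) (fun _ => (⊤ : ℕ∞))) := by
  rw [gam_interleave_top, gam_interleave_top]
  exact (Equiv.prod_comp σ.symm _).symm

/-- **Corollary (permuting blocks of 1s separated by infinite blocks of 0s).**
If `ℓ₀ = ⋯ = ℓ_{N-1} = ∞`, then for every permutation `σ` of `{0,…,N−1}` we have
`γ_{𝐤∗𝓵} = γ_{σ𝐤∗𝓵}`, where `σ𝐤 = (k_{σ⁻¹(0)},…,k_{σ⁻¹(N-1)})`. -/
theorem gamma_perm_ones_blocks (N : ℕ) (hN : 1 ≤ N) (k : Fin N → ℕ∞) (hk : ∀ j, k j ≠ 0)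
    (σ : Equiv.Perm (Fin N)) :
    gam (interleave k (fun _ => (⊤ : ℕ∞))) =
      gam (interleave (fun j => k (σ.symm j)) (fun _ => (⊤ : ℕ∞))) :=
  gamma_perm_ones_blocks_general N k σ
end
end

section
/- Let N ≥ 1 and 𝐭 ∈ ℕ̄₊^{2N}, and write M(𝐭) = [[𝔞,𝔟],[𝔠,𝔡]] with 𝔞,𝔟,𝔠,𝔡 ∈ R. Then: (i) every coefficient [α^i β^j] of each of 𝔞, 𝔟, 𝔠, 𝔡 is a nonnegative real number; (ii) Σ_{i,j ≥ 0} 2^{−(i+j)} [α^i β^j](𝔞 + 𝔟) = 1 and Σ_{i,j ≥ 0} 2^{−(i+j)} [α^i β^j](𝔠 + 𝔡) = 1, both sums being absolutely convergent. -/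
open MvPowerSeries Finset

noncomputable section

/-- `2^{−(i+j)}` times the (real) coefficient `[α^i β^j] f`. -/
def coefw (i j : ℕ) (f : R2) : ℝ :=
  ((2 : ℝ) ^ (i + j))⁻¹ *
    (MvPowerSeries.coeff (Finsupp.single (0 : Fin 2) i + Finsupp.single (1 : Fin 2) j) f).re

/-!
Give `α` and `β` the weight `1/2`. For series with coefficients in `ℝ≥0`, the weighted sum of all
coefficients, taken in `ℝ≥0∞` where every such sum exists, is a ring homomorphism to `ℝ≥0∞`.
Each of `A₀, A₁, A₀^∞, A₁^∞` has entries with coefficients in `ℝ≥0` (for `A₀^∞, A₁^∞` because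
`(1 - β)⁻¹ = ∑ βⁿ`), and its weighted sums form a row stochastic matrix, e.g. `A₀^∞ ↦ [[1,0],[1,0]]`.
Row stochastic matrices are closed under products, so the same holds for `M(𝐭)`: its coefficients
are nonnegative reals and its weighted row sums equal `1`, in particular are finite, which gives
the (absolute) convergence.
-/

open scoped NNReal ENNReal

-- `ℝ≥0∞` is not a topological semiring, so the general Cauchy product formula does not apply.
theorem ENNReal.tsum_mul_tsum_eq_tsum_sum_antidiagonal {A : Type*} [AddCommMonoid A]
    [Finset.HasAntidiagonal A] (f g : A → ℝ≥0∞) :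
    (∑' n, f n) * ∑' n, g n = ∑' n, ∑ kl ∈ antidiagonal n, f kl.1 * g kl.2 := by
  simp_rw [← ENNReal.tsum_mul_right, ← ENNReal.tsum_mul_left]
  rw [← ENNReal.tsum_prod (f := fun a b => f a * g b),
    ← HasAntidiagonal.sigmaAntidiagonalEquivProd.tsum_eq, ENNReal.tsum_sigma']
  refine tsum_congr fun n => ?_
  rw [tsum_fintype, ← Finset.sum_coe_sort (antidiagonal n)]
  rfl

namespace MvPowerSeries

variable {σ : Type*}

def geomSeries {R : Type*} [Semiring R] (s : σ) : MvPowerSeries σ R :=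
  (Set.range (Finsupp.single s)).indicator 1

open Classical in
theorem coeff_geomSeries {R : Type*} [Semiring R] (s : σ) (d : σ →₀ ℕ) :
    coeff d (geomSeries s : MvPowerSeries σ R) = if ∃ n, Finsupp.single s n = d then 1 else 0 :=
  Set.indicator_apply _ _ _

theorem geomSeries_eq_one_add_X_mul {R : Type*} [CommSemiring R] (s : σ) :
    (geomSeries s : MvPowerSeries σ R) = 1 + X s * geomSeries s := by
  classical
  ext d
  rw [map_add, coeff_one, X_def, coeff_monomial_mul, one_mul, coeff_geomSeries, coeff_geomSeries]
  by_cases hd : ∃ n, Finsupp.single s n = d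
  · obtain ⟨_ | n, rfl⟩ := hd
    · simp
    · have hsub : Finsupp.single s (n + 1) - Finsupp.single s 1 = Finsupp.single s n := by
        rw [← Finsupp.single_tsub, Nat.add_sub_cancel]
      rw [if_pos ⟨_, rfl⟩, if_neg (by simp), if_pos (Finsupp.single_le_iff.2 (by simp)),
        hsub, if_pos ⟨n, rfl⟩, zero_add]
  · have hd0 : d ≠ 0 := fun h => hd ⟨0, by simp [h]⟩
    rw [if_neg hd, if_neg hd0, zero_add]
    split_ifs with hle hsub
    · obtain ⟨n, hn⟩ := hsub
      exact absurd ⟨n + 1, by rw [Finsupp.single_add, hn, tsub_add_cancel_of_le hle]⟩ hd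
    all_goals rfl

theorem map_geomSeries {R S : Type*} [CommSemiring R] [CommSemiring S] (f : R →+* S) (s : σ) :
    map f (geomSeries s) = geomSeries s := by
  classical
  ext d
  simp only [coeff_map, coeff_geomSeries]
  split_ifs <;> simp

theorem geomSeries_eq_inv {k : Type*} [Field k] (s : σ) :
    (geomSeries s : MvPowerSeries σ k) = (1 - X s)⁻¹ := by
  rw [MvPowerSeries.eq_inv_iff_mul_eq_one (by simp)]
  linear_combination geomSeries_eq_one_add_X_mul (R := k) s

abbrev nnrealToComplex : MvPowerSeries σ ℝ≥0 →+* MvPowerSeries σ ℂ :=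
  map (Complex.ofRealHom.comp NNReal.toRealHom)

def ennrealEval (x : σ → ℝ≥0) : MvPowerSeries σ ℝ≥0 →+* ℝ≥0∞ where
  toFun f := ∑' d, ((coeff d f * d.prod fun s n => x s ^ n : ℝ≥0) : ℝ≥0∞)
  map_one' := by
    classical
    rw [tsum_eq_single 0 fun d hd => by simp [coeff_one, hd]]
    simp
  map_mul' f g := by
    classical
    rw [ENNReal.tsum_mul_tsum_eq_tsum_sum_antidiagonal]
    refine tsum_congr fun d => ?_
    rw [coeff_mul, Finset.sum_mul, ENNReal.ofNNReal_finsetSum]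
    refine Finset.sum_congr rfl fun p hp => ?_
    rw [← HasAntidiagonal.mem_antidiagonal.1 hp,
      Finsupp.prod_add_index' (by simp) fun _ _ _ => pow_add _ _ _]
    push_cast
    ring
  map_zero' := by simp
  map_add' f g := by simp [add_mul, ENNReal.tsum_add]

theorem ennrealEval_apply (x : σ → ℝ≥0) (f : MvPowerSeries σ ℝ≥0) :
    ennrealEval x f = ∑' d, ((coeff d f * d.prod fun s n => x s ^ n : ℝ≥0) : ℝ≥0∞) :=
  rfl

theorem ennrealEval_X (x : σ → ℝ≥0) (s : σ) : ennrealEval x (X s) = x s := by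
  classical
  rw [ennrealEval_apply, tsum_eq_single (Finsupp.single s 1) fun d hd => by simp [coeff_X, hd]]
  simp

theorem ennrealEval_geomSeries (x : σ → ℝ≥0) (s : σ) :
    ennrealEval x (geomSeries s) = (1 - (x s : ℝ≥0∞))⁻¹ := by
  classical
  rw [ennrealEval_apply, ← ENNReal.tsum_geometric, ← (Finsupp.single_injective s).tsum_eq]
  · refine tsum_congr fun n => ?_
    rw [coeff_geomSeries, if_pos ⟨n, rfl⟩]
    simp
  · intro d hd
    by_contra h
    simp [coeff_geomSeries, Set.mem_range.not.1 h] at hd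

theorem hasSum_of_ennrealEval_eq {x : σ → ℝ≥0} {f : MvPowerSeries σ ℝ≥0} {a : ℝ≥0}
    (h : ennrealEval x f = a) :
    HasSum (fun d => ((coeff d f * d.prod fun s n => x s ^ n : ℝ≥0) : ℝ)) a :=
  NNReal.hasSum_coe.2 <| ENNReal.hasSum_coe.1 <| h ▸ ENNReal.summable.hasSum

end MvPowerSeries

section Stochastic

variable {σ n : Type*} [Fintype n] [DecidableEq n]

/-- Matrices over `ℂ[[σ]]` with coefficients in `ℝ≥0` whose evaluation at `x` is row stochastic. -/
def nonnegStochastic (σ n : Type*) [Fintype n] [DecidableEq n] (x : σ → ℝ≥0) :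
    Submonoid (Matrix n n (MvPowerSeries σ ℂ)) :=
  ((Matrix.rowStochastic ℝ≥0∞ n).comap (ennrealEval x).mapMatrix).map nnrealToComplex.mapMatrix

theorem coeff_im_eq_zero_and_re_nonneg_of_mem_nonnegStochastic {x : σ → ℝ≥0}
    {M : Matrix n n (MvPowerSeries σ ℂ)} (hM : M ∈ nonnegStochastic σ n x) (i j : n)
    (d : σ →₀ ℕ) : (coeff d (M i j)).im = 0 ∧ 0 ≤ (coeff d (M i j)).re := by
  obtain ⟨N, -, rfl⟩ := hM
  simp

theorem hasSum_row_of_mem_nonnegStochastic {x : σ → ℝ≥0}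
    {M : Matrix n n (MvPowerSeries σ ℂ)} (hM : M ∈ nonnegStochastic σ n x) (i : n) :
    HasSum (fun d => ((d.prod fun s k => x s ^ k : ℝ≥0) : ℝ) * (coeff d (∑ j, M i j)).re) 1 := by
  obtain ⟨N, hN, rfl⟩ := hM
  have hrow : ennrealEval x (∑ j, N i j) = (1 : ℝ≥0) := by
    simpa using Matrix.sum_row_of_mem_rowStochastic hN i
  convert hasSum_of_ennrealEval_eq hrow using 1
  · ext d
    simp [mul_comm]
  · simp

theorem mapMatrix_mem_nonnegStochastic_of_fin_two {x : σ → ℝ≥0}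
    {a b c d : MvPowerSeries σ ℝ≥0} (hab : ennrealEval x a + ennrealEval x b = 1)
    (hcd : ennrealEval x c + ennrealEval x d = 1) :
    nnrealToComplex.mapMatrix !![a, b; c, d] ∈ nonnegStochastic σ (Fin 2) x := by
  refine ⟨!![a, b; c, d], Matrix.mem_rowStochastic_iff_sum.2 ⟨fun _ _ => zero_le, ?_⟩, rfl⟩
  intro i
  fin_cases i <;> simpa [Fin.sum_univ_two]

end Stochastic

theorem Mmat_mem {S : Submonoid (Matrix (Fin 2) (Fin 2) R2)} (h0 : A0 ∈ S) (h1 : A1 ∈ S)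
    (h0inf : A0inf ∈ S) (h1inf : A1inf ∈ S) {N : ℕ} (t : Fin (2 * N) → ℕ∞) : Mmat t ∈ S := by
  have powE_mem {A Ainf} (hA : A ∈ S) (hAinf : Ainf ∈ S) (k : ℕ∞) : powE A Ainf k ∈ S := by
    induction k using WithTop.recTopCoe with
    | top => exact hAinf
    | coe k => exact pow_mem hA k
  refine Submonoid.list_prod_mem _ fun M hM => ?_
  obtain ⟨j, -, rfl⟩ := List.mem_map.1 hM
  exact mul_mem (powE_mem h1 h1inf _) (powE_mem h0 h0inf _)

local notation "𝕊" => nonnegStochastic (Fin 2) (Fin 2) (fun _ : Fin 2 => (2⁻¹ : ℝ≥0))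

theorem A0_mem_nonnegStochastic : A0 ∈ 𝕊 := by
  have h : A0 = nnrealToComplex.mapMatrix !![1, 0; X 0, X 1] := by
    ext i j; fin_cases i <;> fin_cases j <;> simp [A0, pa, pb]
  rw [h]
  exact mapMatrix_mem_nonnegStochastic_of_fin_two (by simp)
    (by simp [ennrealEval_X, ENNReal.inv_two_add_inv_two])

theorem A1_mem_nonnegStochastic : A1 ∈ 𝕊 := by
  have h : A1 = nnrealToComplex.mapMatrix !![X 0, X 1; 0, 1] := by
    ext i j; fin_cases i <;> fin_cases j <;> simp [A1, pa, pb]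
  rw [h]
  exact mapMatrix_mem_nonnegStochastic_of_fin_two
    (by simp [ennrealEval_X, ENNReal.inv_two_add_inv_two]) (by simp)

theorem A0inf_mem_nonnegStochastic : A0inf ∈ 𝕊 := by
  have h : A0inf = nnrealToComplex.mapMatrix !![1, 0; X 0 * geomSeries 1, 0] := by
    ext i j; fin_cases i <;> fin_cases j <;> simp [A0inf, pa, pb, map_geomSeries, geomSeries_eq_inv]
  rw [h]
  exact mapMatrix_mem_nonnegStochastic_of_fin_two (by simp)
    (by simp [ennrealEval_X, ennrealEval_geomSeries, ENNReal.one_sub_inv_two,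
      ENNReal.inv_mul_cancel])

theorem A1inf_mem_nonnegStochastic : A1inf ∈ 𝕊 := by
  have h : A1inf = nnrealToComplex.mapMatrix !![0, X 1 * geomSeries 0; 0, 1] := by
    ext i j; fin_cases i <;> fin_cases j <;> simp [A1inf, pa, pb, map_geomSeries, geomSeries_eq_inv]
  rw [h]
  exact mapMatrix_mem_nonnegStochastic_of_fin_two
    (by simp [ennrealEval_X, ennrealEval_geomSeries, ENNReal.one_sub_inv_two,
      ENNReal.inv_mul_cancel])
    (by simp)

theorem hasSum_coefw_row_of_mem_nonnegStochastic {M : Matrix (Fin 2) (Fin 2) R2} (hM : M ∈ 𝕊)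
    (i : Fin 2) : HasSum (fun p : ℕ × ℕ => coefw p.1 p.2 (M i 0 + M i 1)) 1 := by
  let e : ℕ × ℕ ≃ (Fin 2 →₀ ℕ) := (finTwoArrowEquiv ℕ).symm.trans Finsupp.equivFunOnFinite.symm
  have he (p : ℕ × ℕ) : e p = Finsupp.single 0 p.1 + Finsupp.single 1 p.2 := by
    ext s; fin_cases s <;> simp [e]
  have h := hasSum_row_of_mem_nonnegStochastic hM i
  rw [Fin.sum_univ_two, ← e.hasSum_iff] at h
  convert h using 2 with p
  rw [Function.comp_apply, he, Finsupp.prod_add_index' (by simp) fun _ _ _ => pow_add _ _ _,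
    Finsupp.prod_single_index (by simp), Finsupp.prod_single_index (by simp), coefw]
  push_cast
  rw [pow_add, mul_inv, inv_pow, inv_pow]

theorem Mmat_coeff_nonneg_and_row_sums_general (N : ℕ)
    (t : Fin (2 * N) → ℕ∞) :
    (∀ (p q : Fin 2) (d : Fin 2 →₀ ℕ),
        (MvPowerSeries.coeff d (Mmat t p q)).im = 0 ∧
        0 ≤ (MvPowerSeries.coeff d (Mmat t p q)).re) ∧
    Summable (fun p : ℕ × ℕ => coefw p.1 p.2 (Mmat t 0 0 + Mmat t 0 1)) ∧
    (∑' p : ℕ × ℕ, coefw p.1 p.2 (Mmat t 0 0 + Mmat t 0 1)) = 1 ∧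
    Summable (fun p : ℕ × ℕ => coefw p.1 p.2 (Mmat t 1 0 + Mmat t 1 1)) ∧
    (∑' p : ℕ × ℕ, coefw p.1 p.2 (Mmat t 1 0 + Mmat t 1 1)) = 1 := by
  have hM : Mmat t ∈ 𝕊 := Mmat_mem A0_mem_nonnegStochastic A1_mem_nonnegStochastic
    A0inf_mem_nonnegStochastic A1inf_mem_nonnegStochastic t
  have h0 := hasSum_coefw_row_of_mem_nonnegStochastic hM 0
  have h1 := hasSum_coefw_row_of_mem_nonnegStochastic hM 1
  exact ⟨coeff_im_eq_zero_and_re_nonneg_of_mem_nonnegStochastic hM, h0.summable, h0.tsum_eq,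
    h1.summable, h1.tsum_eq⟩

/-- **Lemma (nonnegative coefficients and total mass of `M(𝐭)`).**
Writing `M(𝐭) = [[𝔞,𝔟],[𝔠,𝔡]]`: (i) every coefficient of `𝔞,𝔟,𝔠,𝔡` is a nonnegative
real number; (ii) `Σ_{i,j≥0} 2^{−(i+j)} [α^i β^j](𝔞+𝔟) = 1` and
`Σ_{i,j≥0} 2^{−(i+j)} [α^i β^j](𝔠+𝔡) = 1`, both sums being absolutely convergent. -/
theorem Mmat_coeff_nonneg_and_row_sums (N : ℕ) (hN : 1 ≤ N)
    (t : Fin (2 * N) → ℕ∞) (ht : ∀ i, t i ≠ 0) :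
    (∀ (p q : Fin 2) (d : Fin 2 →₀ ℕ),
        (MvPowerSeries.coeff d (Mmat t p q)).im = 0 ∧
        0 ≤ (MvPowerSeries.coeff d (Mmat t p q)).re) ∧
    Summable (fun p : ℕ × ℕ => coefw p.1 p.2 (Mmat t 0 0 + Mmat t 0 1)) ∧
    (∑' p : ℕ × ℕ, coefw p.1 p.2 (Mmat t 0 0 + Mmat t 0 1)) = 1 ∧
    Summable (fun p : ℕ × ℕ => coefw p.1 p.2 (Mmat t 1 0 + Mmat t 1 1)) ∧
    (∑' p : ℕ × ℕ, coefw p.1 p.2 (Mmat t 1 0 + Mmat t 1 1)) = 1 :=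
  Mmat_coeff_nonneg_and_row_sums_general N t
end
end

section
/- For all natural numbers m, n and every complex number x ≠ 1: Σ_{k=0}^{n} binom(m+k, k) x^k = 1/(1−x)^{m+1} − (x^{n+1}/(1−x)) · Σ_{j=0}^{m} binom(m+n+1, m−j) (x/(1−x))^j. -/
/-!
Put y = 1 - x and N = m + n + 1. After multiplying by y^(m+1) and reindexing j = m - i, the
identity becomes y^(m+1) ∑_{k ≤ n} C(m+k, k) x^k + ∑_{i ≤ m} C(N, i) y^i x^(N-i) = 1 = (x + y)^N:
the first m+1 terms of the binomial expansion of (x + y)^N plus a negative-binomial tail. This is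
proved by induction on n, since by Pascal's rule raising N by one multiplies the truncated binomial
sum by x + y and removes exactly C(N, m) y^(m+1) x^(N-m).
-/

open Finset

theorem sum_range_choose_succ_mul_pow_add {R : Type*} [CommRing R] (x y : R) {m N : ℕ}
    (hm : m ≤ N) :
    ∑ i ∈ range (m + 1), ((N + 1).choose i : R) * y ^ i * x ^ (N + 1 - i) +
        (N.choose m : R) * y ^ (m + 1) * x ^ (N - m) =
      (x + y) * ∑ i ∈ range (m + 1), (N.choose i : R) * y ^ i * x ^ (N - i) := by
  induction m with
  | zero => simp only [zero_add, sum_range_one, Nat.choose_zero_right, Nat.sub_zero]; ring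
  | succ m ih =>
    have hx : x ^ (N - m) = x * x ^ (N - (m + 1)) := by
      rw [← pow_succ', Nat.sub_add_eq, Nat.sub_add_cancel (Nat.sub_pos_of_lt hm)]
    rw [sum_range_succ _ (m + 1), sum_range_succ _ (m + 1), Nat.choose_succ_succ',
      Nat.add_sub_add_right]
    rw [hx] at ih ⊢
    push_cast
    linear_combination ih (by omega)

theorem pow_mul_sum_choose_add_sum_choose_of_add_eq_one {R : Type*} [CommRing R] {x y : R}
    (h : x + y = 1) (m n : ℕ) :
    y ^ (m + 1) * ∑ k ∈ range n, ((m + k).choose k : R) * x ^ k +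
        ∑ i ∈ range (m + 1), ((m + n).choose i : R) * y ^ i * x ^ (m + n - i) = 1 := by
  induction n with
  | zero =>
    calc _ = (y + x) ^ m := by
          rw [add_pow, sum_range_zero, mul_zero, zero_add, add_zero]
          exact sum_congr rfl fun i _ ↦ by ring
      _ = 1 := by rw [add_comm, h, one_pow]
  | succ n ih =>
    have step := sum_range_choose_succ_mul_pow_add x y (Nat.le_add_right m n)
    rw [h, one_mul, Nat.add_sub_cancel_left, Nat.choose_symm_add] at step
    rw [sum_range_succ, ← add_assoc]
    linear_combination ih + step

theorem div_mul_sum_choose_sub_mul_div_pow {K : Type*} [Field K] {x y : K} (hy : y ≠ 0)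
    (m p N : ℕ) :
    x ^ p / y * ∑ j ∈ range (m + 1), (N.choose (m - j) : K) * (x / y) ^ j =
      (∑ i ∈ range (m + 1), (N.choose i : K) * y ^ i * x ^ (m + p - i)) / y ^ (m + 1) := by
  rw [← sum_range_reflect, mul_sum, sum_div]
  refine sum_congr rfl fun i hmem ↦ ?_
  have hi : i ≤ m := Nat.lt_succ_iff.mp (mem_range.mp hmem)
  rw [Nat.add_sub_cancel, Nat.sub_sub_self hi, Nat.sub_add_comm hi, pow_add, div_pow,
    show m + 1 = (m - i) + i + 1 by omega]
  field_simp
  ring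

/-- **Lemma (binomial identity).** For `m, n ∈ ℕ` and `x ∈ ℂ`, `x ≠ 1`:
`Σ_{k=0}^{n} C(m+k,k) x^k = 1/(1−x)^{m+1} − (x^{n+1}/(1−x)) Σ_{j=0}^{m} C(m+n+1, m−j) (x/(1−x))^j`. -/
theorem sum_binomial_geometric (m n : ℕ) (x : ℂ) (hx : x ≠ 1) :
    ∑ k ∈ Finset.range (n + 1), ((m + k).choose k : ℂ) * x ^ k =
      ((1 - x) ^ (m + 1))⁻¹ -
        (x ^ (n + 1) / (1 - x)) *
          ∑ j ∈ Finset.range (m + 1), ((m + n + 1).choose (m - j) : ℂ) * (x / (1 - x)) ^ j := by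
  have hy : 1 - x ≠ 0 := sub_ne_zero.mpr hx.symm
  have key := pow_mul_sum_choose_add_sum_choose_of_add_eq_one (add_sub_cancel x 1) m (n + 1)
  rw [div_mul_sum_choose_sub_mul_div_pow hy, ← add_assoc]
  field_simp
  linear_combination key
end

section
/- For every natural number m: Σ_{k=0}^{m} binom(m+k, k) · 4^{−k} = (4/3)^{m+1} − (1/3) · 12^{−m} · Σ_{j=0}^{m} binom(2m+1, j) · 3^j. -/
/-!
For `x * (1 + y) = 1` put `q = x` and `p = x * y = 1 - q`. Then `p^(m+1) Σ_{k ≤ m} C(m+k, k) q^k`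
is the probability that `m + 1` successes occur before `m + 1` failures, i.e.
`P(Bin(2m+1, p) ≥ m + 1)`, while `x^(2m+1) Σ_{j ≤ m} C(2m+1, j) y^j = P(Bin(2m+1, p) ≤ m)`;
so the two add up to `1`. By induction on `m`: Pascal's rule shows that the step `m → m + 1`
changes the two terms by `± C(2m+1, m) (pq)^(m+1) (p - q)`. The theorem is the case
`x = 1/4`, `y = 3`.
-/

open Finset

theorem Nat.choose_two_mul_add_two_succ (m : ℕ) :
    (2 * m + 2).choose (m + 1) = 2 * (2 * m + 1).choose m := by
  rw [Nat.choose_succ_succ', Nat.choose_symm_half]; ring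

section
variable {R : Type*} [CommRing R]

theorem sum_range_choose_succ_mul_pow (n r : ℕ) (y : R) :
    ∑ j ∈ range (r + 1), ((n + 1).choose j : R) * y ^ j =
      (1 + y) * ∑ j ∈ range (r + 1), (n.choose j : R) * y ^ j - n.choose r * y ^ (r + 1) := by
  induction r with
  | zero => simp
  | succ r ih =>
    rw [sum_range_succ, ih, sum_range_succ _ (r + 1), Nat.choose_succ_succ']
    push_cast
    ring

theorem one_sub_mul_sum_range_add_succ_choose (n r : ℕ) (x : R) :
    (1 - x) * ∑ k ∈ range (r + 1), ((n + 1 + k).choose k : R) * x ^ k =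
      ∑ k ∈ range (r + 1), ((n + k).choose k : R) * x ^ k - (n + 1 + r).choose r * x ^ (r + 1) := by
  induction r with
  | zero => simp
  | succ r ih =>
    rw [sum_range_succ, mul_add, ih, sum_range_succ _ (r + 1),
      show n + 1 + (r + 1) = n + 1 + r + 1 by omega, Nat.choose_succ_succ',
      show n + 1 + r = n + (r + 1) by omega]
    push_cast
    ring

theorem one_sub_mul_sum_range_add_choose_succ (m : ℕ) (x : R) :
    (1 - x) * ∑ k ∈ range (m + 2), ((m + 1 + k).choose k : R) * x ^ k =
      ∑ k ∈ range (m + 1), ((m + k).choose k : R) * x ^ k +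
        (2 * m + 1).choose m * x ^ (m + 1) * (1 - 2 * x) := by
  rw [one_sub_mul_sum_range_add_succ_choose, sum_range_succ,
    show m + 1 + (m + 1) = 2 * m + 2 by omega, Nat.choose_two_mul_add_two_succ, show m + (m + 1) = 2 * m + 1 by omega,
    Nat.choose_symm_half]
  push_cast
  ring

theorem sum_range_choose_two_mul_add_three_mul_pow (m : ℕ) (y : R) :
    ∑ j ∈ range (m + 2), ((2 * m + 3).choose j : R) * y ^ j =
      (1 + y) ^ 2 * ∑ j ∈ range (m + 1), ((2 * m + 1).choose j : R) * y ^ j +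
        (2 * m + 1).choose m * y ^ (m + 1) * (1 - y) := by
  rw [sum_range_choose_succ_mul_pow, sum_range_choose_succ_mul_pow, sum_range_succ, Nat.choose_two_mul_add_two_succ,
    Nat.choose_symm_half]
  push_cast
  ring

theorem pow_mul_sum_choose_add_pow_mul_sum_choose {x y : R} (h : x * (1 + y) = 1) (m : ℕ) :
    (x * y) ^ (m + 1) * ∑ k ∈ range (m + 1), ((m + k).choose k : R) * x ^ k +
      x ^ (2 * m + 1) * ∑ j ∈ range (m + 1), ((2 * m + 1).choose j : R) * y ^ j = 1 := by
  induction m with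
  | zero => simpa [mul_add, add_comm] using h
  | succ m ih =>
    have hS := one_sub_mul_sum_range_add_choose_succ m x
    have hT := sum_range_choose_two_mul_add_three_mul_pow m y
    set S' := ∑ k ∈ range (m + 2), ((m + 1 + k).choose k : R) * x ^ k
    set T := ∑ j ∈ range (m + 1), ((2 * m + 1).choose j : R) * y ^ j
    set C : R := (((2 * m + 1).choose m : ℕ) : R)
    rw [show 2 * (m + 1) + 1 = 2 * m + 3 by omega]
    linear_combination (x * y) ^ (m + 1) * hS + x ^ (2 * m + 3) * hT + ih +
      ((x * y) ^ (m + 1) * S' + x ^ (2 * m + 1) * T * (x * (1 + y) + 1) -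
        C * x ^ (2 * m + 2) * y ^ (m + 1)) * h

end

/-- **Lemma.** `Σ_{k=0}^{m} C(m+k,k) 4^{−k} = (4/3)^{m+1} − (1/3)·12^{−m} Σ_{j=0}^{m} C(2m+1,j) 3^j`. -/
theorem sum_binomial_quarter_pow (m : ℕ) :
    ∑ k ∈ Finset.range (m + 1), ((m + k).choose k : ℝ) * ((4 : ℝ) ^ k)⁻¹ =
      ((4 : ℝ) / 3) ^ (m + 1) -
        (1 / 3) * ((12 : ℝ) ^ m)⁻¹ *
          ∑ j ∈ Finset.range (m + 1), ((2 * m + 1).choose j : ℝ) * 3 ^ j := by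
  have h := pow_mul_sum_choose_add_pow_mul_sum_choose (x := (4 : ℝ)⁻¹) (y := 3) (by norm_num) m
  simp_rw [inv_pow] at h
  set S := ∑ k ∈ range (m + 1), ((m + k).choose k : ℝ) * ((4 : ℝ) ^ k)⁻¹
  set T := ∑ j ∈ range (m + 1), ((2 * m + 1).choose j : ℝ) * 3 ^ j
  have h₁ : ((4 : ℝ) / 3) ^ (m + 1) * ((4 : ℝ)⁻¹ * 3) ^ (m + 1) = 1 := by
    rw [← mul_pow]; norm_num
  have h₂ : ((4 : ℝ) / 3) ^ (m + 1) * ((4 : ℝ) ^ (2 * m + 1))⁻¹ = 1 / 3 * ((12 : ℝ) ^ m)⁻¹ := by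
    rw [show (12 : ℝ) ^ m = 4 ^ m * 3 ^ m by rw [← mul_pow]; norm_num,
      show (4 : ℝ) ^ (2 * m + 1) = 4 ^ m * 4 ^ m * 4 by ring, div_pow]
    field_simp
    ring
  linear_combination ((4 : ℝ) / 3) ^ (m + 1) * h - S * h₁ - T * h₂
end

section
/- For every integer n ≥ 1: 1/√(π(n + 1/2)) < binom(2n, n)/4^n < 1/√(πn). -/
/-!
Wallis' partial products `W n` satisfy `(2n+1) W n = (4ⁿ / C(2n,n))²`, and they increase strictly
to `π/2` with `W n ≥ (2n+1)/(2n+2) · π/2`. Hence `π n < (2n+1) W n < π (n + 1/2)`, and taking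
reciprocal square roots gives both bounds.
-/

open Real Nat

namespace Real.Wallis

theorem strictMono_W : StrictMono W := by
  refine strictMono_nat_of_lt_succ fun k => ?_
  rw [W_succ, lt_mul_iff_one_lt_right (W_pos k), _root_.div_mul_div_comm,
    one_lt_div (by positivity)]
  nlinarith [k.cast_nonneg (α := ℝ)]

theorem W_lt_pi_div_two (k : ℕ) : W k < π / 2 :=
  (strictMono_W k.lt_succ_self).trans_le (W_le _)

theorem two_mul_add_one_mul_W_eq (n : ℕ) :
    (2 * n + 1) * W n = (4 ^ n / (2 * n).choose n) ^ 2 := by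
  have hchoose : ((2 * n).choose n : ℝ) * n ! * n ! = (2 * n)! := by
    have := Nat.choose_mul_factorial_mul_factorial (n.le_add_left n)
    rw [Nat.add_sub_cancel, ← two_mul] at this
    exact_mod_cast this
  rw [W_eq_factorial_ratio, ← hchoose, pow_mul, show (2 : ℝ) ^ 4 = 4 ^ 2 by norm_num, ← pow_mul,
    mul_comm 2 n, pow_mul]
  field_simp

theorem pi_mul_lt_two_mul_add_one_mul_W (n : ℕ) : π * n < (2 * n + 1) * W n := by
  have hn : (0 : ℝ) < n + 1 := by positivity
  -- `(2n+1)² = 4n(n+1) + 1`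
  calc π * n < π * n + π / (4 * (n + 1)) := lt_add_of_pos_right _ (by positivity)
    _ = (2 * n + 1) * ((2 * n + 1) / (2 * n + 2) * (π / 2)) := by field_simp; ring
    _ ≤ (2 * n + 1) * W n := by gcongr; exact le_W n

theorem two_mul_add_one_mul_W_lt (n : ℕ) : (2 * n + 1) * W n < π * (n + 1 / 2) := by
  calc (2 * n + 1) * W n < (2 * n + 1) * (π / 2) := by gcongr; exact W_lt_pi_div_two n
    _ = π * (n + 1 / 2) := by ring

end Real.Wallis

open Real.Wallis in
/-- **Lemma (bounds for the central binomial coefficient).** For `n ≥ 1`: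
`1/√(π(n+1/2)) < C(2n,n)/4^n < 1/√(πn)`. -/
theorem central_binomial_bounds (n : ℕ) (hn : 1 ≤ n) :
    1 / Real.sqrt (Real.pi * (n + 1 / 2)) < ((2 * n).choose n : ℝ) / 4 ^ n ∧
    ((2 * n).choose n : ℝ) / 4 ^ n < 1 / Real.sqrt (Real.pi * n) := by
  have hW : 0 < (2 * n + 1) * W n := mul_pos (by positivity) (W_pos n)
  have hn' : (0 : ℝ) < n := mod_cast hn
  have hsqrt : √((2 * n + 1) * W n) = 4 ^ n / (2 * n).choose n := by
    rw [two_mul_add_one_mul_W_eq, sqrt_sq (by positivity)]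
  rw [← one_div_div (4 ^ n : ℝ), ← hsqrt]
  exact ⟨one_div_lt_one_div_of_lt (sqrt_pos.2 hW) (sqrt_lt_sqrt hW.le (two_mul_add_one_mul_W_lt n)),
    one_div_lt_one_div_of_lt (sqrt_pos.2 (by positivity))
      (sqrt_lt_sqrt (by positivity) (pi_mul_lt_two_mul_add_one_mul_W n))⟩
end

section
/- Let N ≥ 1 and let G_N = (α·(1−β)⁻¹)^N ∈ ℂ[[α,β]]. Then Σ_{i,j ≥ 0, i ≥ j} 2^{−(i+j)} [α^i β^j] G_N = 1/2 + 4^{−N} binom(2N−1, N). (Here G_N = γ_𝐭 for the extended binary expansion 𝐭 = (1,∞,1,∞,…,1,∞) ∈ ℕ̄₊^{2N} with all k_j = 1 and all ℓ_j = ∞.) -/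
open MvPowerSeries Finset

noncomputable section

/-!
Since `G_N = α^N (1 - β)^{-N}`, the coefficient `[α^i β^j] G_N` is `C(N-1+j, N-1)` when `i = N`
and `0` otherwise; here `(1 - β)⁻¹` is the image of the one-variable series `1 + X + X² + ⋯`
under `X ↦ β`. The sum is therefore `Σ_{j ≤ N} 2^{-(N+j)} C(N-1+j, N-1)`. With `n = N - 1`,
the terms `j ≤ n` contribute `1/2`, because
`Σ_{j ≤ n} C(n+j, n) 2^{n-j} = Σ_{k ≤ n} C(2n+1, k) = 4^n`
(the first equality by induction on the upper limit using Pascal's rule, the second by the symmetry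
of row `2n+1`), and the term `j = N` is `4^{-N} C(2N-1, N)`.
-/

open Function

namespace MvPowerSeries

variable {σ R : Type*}

theorem coeff_rename_punit [CommSemiring R] [DecidableEq σ] (s : σ) (g : PowerSeries R)
    (x : σ →₀ ℕ) :
    coeff x (rename (Embedding.punit s) g) =
      if x = Finsupp.single s (x s) then PowerSeries.coeff (x s) g else 0 := by
  split_ifs with hx
  · generalize x s = n at hx
    subst hx
    have hemb : Finsupp.embDomain (Embedding.punit s) (Finsupp.single PUnit.unit n) =
        Finsupp.single s n := Finsupp.embDomain_single _ _ _
    rw [← hemb, coeff_embDomain_rename]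
    rfl
  · refine coeff_rename_eq_zero _ _ ?_
    rintro ⟨y, rfl⟩
    obtain ⟨n, rfl⟩ : ∃ n, y = Finsupp.single PUnit.unit n := ⟨_, Finsupp.unique_single y⟩
    refine hx ?_
    rw [Finsupp.mapDomain_single]
    change Finsupp.single s n = Finsupp.single s (Finsupp.single s n s)
    rw [Finsupp.single_eq_same]

theorem rename_inv {τ k : Type*} [Field k] (f : σ → τ) [Filter.TendstoCofinite f]
    (φ : MvPowerSeries σ k) : rename f φ⁻¹ = (rename f φ)⁻¹ := by
  by_cases h : constantCoeff φ = 0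
  · rw [inv_eq_zero.mpr h, inv_eq_zero.mpr (by rwa [constantCoeff_rename]), map_zero]
  · rw [MvPowerSeries.eq_inv_iff_mul_eq_one (by rwa [constantCoeff_rename]), ← map_mul,
      MvPowerSeries.inv_mul_cancel _ h, map_one]

end MvPowerSeries

theorem PowerSeries.inv_one_sub_X {k : Type*} [Field k] : (1 - X : PowerSeries k)⁻¹ = mk 1 := by
  rw [PowerSeries.inv_eq_iff_mul_eq_one (by simp), mk_one_mul_one_sub_eq_one]

theorem Nat.sum_range_choose_add_one (N m : ℕ) :
    ∑ k ∈ range (m + 2), (N + 1).choose k =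
      2 * ∑ k ∈ range (m + 1), N.choose k + N.choose (m + 1) := by
  have hpeel := sum_range_succ' (N.choose ·) (m + 1)
  rw [sum_range_succ] at hpeel
  rw [sum_range_succ']
  simp only [Nat.choose_succ_succ, sum_add_distrib, Nat.choose_zero_right,
    Nat.succ_eq_add_one] at hpeel ⊢
  omega

theorem Nat.sum_range_add_choose_mul_two_pow (n m : ℕ) :
    ∑ j ∈ range (m + 1), (n + j).choose n * 2 ^ (m - j) =
      ∑ k ∈ range (m + 1), (n + m + 1).choose k := by
  induction m with
  | zero => simp
  | succ m ih =>
    have hdouble : ∑ j ∈ range (m + 1), (n + j).choose n * 2 ^ (m + 1 - j) =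
        2 * ∑ j ∈ range (m + 1), (n + j).choose n * 2 ^ (m - j) := by
      rw [mul_sum]
      refine sum_congr rfl fun j hj => ?_
      rw [Nat.sub_add_comm (Nat.le_of_lt_succ (mem_range.mp hj)), pow_succ]
      ring
    rw [sum_range_succ, hdouble, ih, Nat.sub_self, pow_zero, mul_one,
      show n + (m + 1) + 1 = n + m + 1 + 1 by ring, Nat.sum_range_choose_add_one,
      show n + (m + 1) = n + m + 1 by ring]
    congr 1
    exact Nat.choose_symm_add (a := n) (b := m + 1)

theorem Nat.sum_range_add_choose_mul_two_pow_self (n : ℕ) :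
    ∑ j ∈ range (n + 1), (n + j).choose n * 2 ^ (n - j) = 4 ^ n := by
  rw [Nat.sum_range_add_choose_mul_two_pow, ← two_mul, Nat.sum_range_choose_halfway]

theorem sum_range_inv_two_pow_mul_add_choose (n : ℕ) :
    ∑ j ∈ range (n + 2), ((2 : ℝ) ^ (n + 1 + j))⁻¹ * ((n + j).choose n : ℝ) =
      1 / 2 + ((4 : ℝ) ^ (n + 1))⁻¹ * ((2 * n + 1).choose (n + 1) : ℝ) := by
  have hbulk : ∑ j ∈ range (n + 1), ((2 : ℝ) ^ (n + 1 + j))⁻¹ * ((n + j).choose n : ℝ) =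
      ((2 : ℝ) ^ (2 * n + 1))⁻¹ *
        ∑ j ∈ range (n + 1), ((n + j).choose n * 2 ^ (n - j) : ℕ) := by
    rw [Nat.cast_sum, mul_sum]
    refine sum_congr rfl fun j hj => ?_
    have hj : j ≤ n := Nat.le_of_lt_succ (mem_range.mp hj)
    rw [show (2 : ℝ) ^ (2 * n + 1) = 2 ^ (n + 1 + j) * 2 ^ (n - j) by
      rw [← pow_add]; congr 1; omega]
    push_cast
    field_simp
  rw [sum_range_succ, hbulk, Nat.sum_range_add_choose_mul_two_pow_self,
    show n + (n + 1) = 2 * n + 1 by ring, Nat.choose_symm_half,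
    show n + 1 + (n + 1) = 2 * (n + 1) by ring, pow_mul, pow_succ]
  push_cast
  rw [pow_mul]
  norm_num

theorem inv_one_sub_pb :
    (1 - pb)⁻¹ = rename (Embedding.punit (1 : Fin 2)) (PowerSeries.mk 1) := by
  rw [← PowerSeries.inv_one_sub_X, MvPowerSeries.rename_inv, map_sub, map_one, PowerSeries.X,
    rename_X]
  rfl

theorem coeff_pa_pow_mul_rename (N i j : ℕ) (g : PowerSeries ℂ) :
    coeff (Finsupp.single 0 i + Finsupp.single 1 j)
        (pa ^ N * rename (Embedding.punit (1 : Fin 2)) g) =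
      if i = N then PowerSeries.coeff j g else 0 := by
  rw [pa, X_pow_eq, coeff_monomial_mul, coeff_rename_punit]
  simp only [Finsupp.le_def, Finsupp.ext_iff, Fin.forall_fin_two, Finsupp.coe_tsub,
    Pi.sub_apply, Finsupp.add_apply, Finsupp.single_apply, Fin.isValue, zero_ne_one, if_false,
    one_ne_zero, if_true, add_zero, zero_add, one_mul, zero_le, and_true, Nat.sub_zero]
  split_ifs <;> first | rfl | omega

theorem coefw_pa_mul_inv_one_sub_pb_pow (n i j : ℕ) :
    coefw i j ((pa * (1 - pb)⁻¹) ^ (n + 1)) =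
      if i = n + 1 then ((2 : ℝ) ^ (i + j))⁻¹ * ((n + j).choose n : ℝ) else 0 := by
  rw [coefw, mul_pow, inv_one_sub_pb, ← map_pow, PowerSeries.mk_one_pow_eq_mk_choose_add,
    coeff_pa_pow_mul_rename, PowerSeries.coeff_mk]
  split_ifs <;> simp

/-- **Proposition.** For `N ≥ 1` and `G_N = (α(1−β)⁻¹)^N` (which equals `γ_𝐭` for
`𝐭 = (1,∞,…,1,∞) ∈ ℕ̄₊^{2N}`),
`Σ_{i ≥ j ≥ 0} 2^{−(i+j)} [α^i β^j] G_N = 1/2 + 4^{−N} C(2N−1, N)`. -/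
theorem c_ones_separated_by_infinite_zeros (N : ℕ) (hN : 1 ≤ N) :
    (∑' p : ℕ × ℕ, if p.2 ≤ p.1 then coefw p.1 p.2 ((pa * (1 - pb)⁻¹) ^ N) else 0) =
      1 / 2 + ((4 : ℝ) ^ N)⁻¹ * ((2 * N - 1).choose N : ℝ) := by
  obtain ⟨n, rfl⟩ : ∃ n, N = n + 1 := ⟨N - 1, by omega⟩
  have hsupp : ∀ p ∉ {n + 1} ×ˢ range (n + 2),
      (if p.2 ≤ p.1 then coefw p.1 p.2 ((pa * (1 - pb)⁻¹) ^ (n + 1)) else 0) = 0 := by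
    rintro ⟨i, j⟩ hp
    simp only [mem_product, mem_singleton, mem_range, not_and] at hp
    rw [coefw_pa_mul_inv_one_sub_pb_pow]
    split_ifs <;> first | rfl | omega
  rw [tsum_eq_sum hsupp, sum_product, sum_singleton, show 2 * (n + 1) - 1 = 2 * n + 1 by omega,
    ← sum_range_inv_two_pow_mul_add_choose]
  refine sum_congr rfl fun j hj => ?_
  rw [if_pos (Nat.le_of_lt_succ (mem_range.mp hj)), coefw_pa_mul_inv_one_sub_pb_pow, if_pos rfl]
end
end

section
/- Let k ≥ 1 be an integer and t = 2^k − 1. Then the natural density of the set {n ∈ ℕ : s(n+t) ≥ s(n)} exists and equals 2/3 + 1/(3·4^k); that is, (1/M)·#{0 ≤ n < M : s(n+t) ≥ s(n)} → 2/3 + 1/(3·4^k) as M → ∞. In particular this density is strictly greater than 2/3. -/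
/-!
Write `n = 2^k q + r` with `r < 2^k`. If `r = 0`, adding `t = 2^k - 1` only fills the low block
with `k` ones. Otherwise `n + t = 2^k (q + 1) + (r - 1)`, and the identity
`s(m + 1) = s(m) + 1 - ν₂(m + 1)` gives `s(n + t) - s(n) = ν₂(r) - ν₂(q + 1)`. So
`s(n + t) ≥ s(n)` iff `gcd(q + 1, 2^k) ∣ r`, a condition of period `4^k` in `n`. Over one period
each `q < 2^k` admits `2^k / gcd(q + 1, 2^k)` values of `r`, and these numbers add up to
`(2·4^k + 1)/3`.
-/

def sdig (n : ℕ) : ℕ := (Nat.digits 2 n).sum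

open Finset Filter Topology

theorem Finset.sum_range_mul_eq_sum_sum {M : Type*} [AddCommMonoid M] (f : ℕ → M) (a b : ℕ) :
    ∑ x ∈ range (b * a), f x = ∑ i ∈ range a, ∑ j ∈ range b, f (b * i + j) := by
  induction a with
  | zero => simp
  | succ a ih => rw [Nat.mul_succ, sum_range_add, ih, sum_range_succ]

namespace Nat

variable {p : ℕ → Prop} [DecidablePred p]

theorem count_mul_eq_sum (a b : ℕ) :
    count p (b * a) = ∑ i ∈ range a, count (fun j => p (b * i + j)) b := by
  simp only [count_eq_card_filter_range, card_filter, sum_range_mul_eq_sum_sum]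

theorem _root_.Function.Periodic.count_mul_add {T : ℕ} (hp : Function.Periodic p T) (j r : ℕ) :
    count p (T * j + r) = j * count p T + count p r := by
  have hblock (i : ℕ) : (fun x => p (T * i + x)) = p := by
    funext x
    rw [add_comm, mul_comm]
    exact hp.nat_mul i x
  rw [count_add, count_mul_eq_sum]
  simp only [hblock, sum_const, card_range, smul_eq_mul]

theorem count_dvd_of_dvd {d n : ℕ} (hd : 0 < d) (hdn : d ∣ n) : count (d ∣ ·) n = n / d := by
  simpa [modEq_zero_iff_dvd, mod_eq_zero_of_dvd hdn] using count_modEq_card n hd 0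

end Nat

theorem Function.Periodic.tendsto_count_div {p : ℕ → Prop} [DecidablePred p] {T : ℕ}
    (hp : Function.Periodic p T) (hT : 0 < T) :
    Tendsto (fun M : ℕ => (Nat.count p M : ℝ) / M) atTop (𝓝 (Nat.count p T / T)) := by
  set c := Nat.count p T
  have hTR : (0 : ℝ) < T := by exact_mod_cast hT
  have hbound (M : ℕ) : |(Nat.count p M : ℝ) - M * (c / T)| ≤ c := by
    rw [← Nat.div_add_mod M T, hp.count_mul_add]
    have hr : M % T < T := Nat.mod_lt M hT
    have hcr : Nat.count p (M % T) ≤ c := Nat.count_monotone p hr.le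
    have hrc : ((M % T : ℕ) : ℝ) * c / T ≤ c := by
      rw [div_le_iff₀ hTR, mul_comm]
      exact mul_le_mul_of_nonneg_left (by exact_mod_cast hr.le) (by positivity)
    have hfull_periods_cancel :
        ((M / T * c + Nat.count p (M % T) : ℕ) : ℝ) - ((T * (M / T) + M % T : ℕ) : ℝ) * (c / T)
          = Nat.count p (M % T) - (M % T : ℕ) * c / T := by
      push_cast
      field_simp
      ring
    rw [hfull_periods_cancel]
    exact abs_sub_le_of_nonneg_of_le (by positivity) (by exact_mod_cast hcr) (by positivity) hrc
  have herr : Tendsto (fun M : ℕ => ((Nat.count p M : ℝ) - M * (c / T)) / M) atTop (𝓝 0) := by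
    refine squeeze_zero_norm (fun M => ?_) (tendsto_const_div_atTop_nhds_zero_nat (c : ℝ))
    rw [norm_div, Real.norm_natCast]
    exact div_le_div_of_nonneg_right (hbound M) (by positivity)
  have hlim := herr.add_const ((c : ℝ) / T)
  rw [zero_add] at hlim
  refine hlim.congr' ?_
  filter_upwards [eventually_ne_atTop 0] with M hM
  field_simp
  ring

theorem padicValNat_le_padicValNat_iff_gcd_pow_dvd {p : ℕ} [hp : Fact p.Prime] {m r k : ℕ}
    (hm : m ≠ 0) (hr0 : r ≠ 0) (hr : r < p ^ k) :
    padicValNat p m ≤ padicValNat p r ↔ m.gcd (p ^ k) ∣ r := by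
  obtain ⟨j, hjk, hg⟩ := (Nat.dvd_prime_pow hp.out).1 (Nat.gcd_dvd_right m (p ^ k))
  have hjm : j ≤ padicValNat p m := (padicValNat_dvd_iff_le hm).1 (hg ▸ Nat.gcd_dvd_left m _)
  have hrk : padicValNat p r < k :=
    (Nat.pow_lt_pow_iff_right hp.out.one_lt).1 <|
      (Nat.le_of_dvd (Nat.pos_of_ne_zero hr0) pow_padicValNat_dvd).trans_lt hr
  rw [hg, padicValNat_dvd_iff_le hr0]
  refine ⟨hjm.trans, fun hjr => ?_⟩
  by_contra! hlt
  have hdvd : p ^ (j + 1) ∣ m.gcd (p ^ k) :=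
    Nat.dvd_gcd ((padicValNat_dvd_iff_le hm).2 (by omega)) (Nat.pow_dvd_pow p (by omega))
  rw [hg, Nat.pow_dvd_pow_iff_le_right hp.out.one_lt] at hdvd
  omega

theorem sdig_two_pow_mul_add {k r : ℕ} (hr : r < 2 ^ k) (q : ℕ) :
    sdig (2 ^ k * q + r) = sdig q + sdig r := by
  rcases q.eq_zero_or_pos with rfl | hq
  · simp [sdig]
  have hlen : (Nat.digits 2 r).length ≤ k := (Nat.digits_length_le_iff (by norm_num) r).2 hr
  have hdig := Nat.digits_append_zeroes_append_digits (n := r) (k := k - (Nat.digits 2 r).length)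
    (by norm_num : 1 < 2) hq
  rw [Nat.add_sub_cancel' hlen] at hdig
  simp [sdig, add_comm (2 ^ k * q), ← hdig, add_comm]

theorem sdig_two_pow_sub_one (k : ℕ) : sdig (2 ^ k - 1) = k := by
  induction k with
  | zero => simp [sdig]
  | succ k ih =>
    have h : 2 ^ (k + 1) - 1 = 2 ^ k * 1 + (2 ^ k - 1) := by
      have := Nat.one_le_two_pow (n := k)
      rw [pow_succ]; omega
    rw [h, sdig_two_pow_mul_add (Nat.sub_one_lt (by positivity)) 1, ih]
    simp [sdig, add_comm]

-- Legendre's formula `ν₂(m!) = m - s(m)`, compared at `m = n` and `m = n + 1`.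
theorem sdig_succ_add_padicValNat (n : ℕ) :
    sdig (n + 1) + padicValNat 2 (n + 1) = sdig n + 1 := by
  have hfact (m : ℕ) : padicValNat 2 m.factorial = m - sdig m := by
    simpa [sdig] using sub_one_mul_padicValNat_factorial (p := 2) m
  have hsucc :
      padicValNat 2 (n + 1).factorial = padicValNat 2 (n + 1) + padicValNat 2 n.factorial := by
    rw [Nat.factorial_succ, padicValNat.mul (by omega) (Nat.factorial_ne_zero n)]
  rw [hfact, hfact] at hsucc
  have := Nat.digit_sum_le 2 n
  have := Nat.digit_sum_le 2 (n + 1)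
  unfold sdig at hsucc ⊢
  omega

theorem sdig_le_sdig_add_two_pow_sub_one_iff {k r : ℕ} (hr : r < 2 ^ k) (q : ℕ) :
    sdig (2 ^ k * q + r) ≤ sdig (2 ^ k * q + r + (2 ^ k - 1)) ↔ (q + 1).gcd (2 ^ k) ∣ r := by
  have hk : 1 ≤ 2 ^ k := Nat.one_le_two_pow
  rcases Nat.eq_zero_or_pos r with rfl | hr0
  · have h := sdig_two_pow_mul_add (k := k) (Nat.sub_one_lt (by positivity)) q
    rw [sdig_two_pow_sub_one] at h
    have h0 : sdig (2 ^ k * q) = sdig q := by simpa [sdig] using sdig_two_pow_mul_add hr q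
    simp [h, h0]
  · have hcarry : 2 ^ k * q + r + (2 ^ k - 1) = 2 ^ k * (q + 1) + (r - 1) := by
      rw [mul_add_one]; omega
    have hq := sdig_succ_add_padicValNat q
    have hr1 := sdig_succ_add_padicValNat (r - 1)
    rw [Nat.sub_add_cancel hr0] at hr1
    rw [hcarry, sdig_two_pow_mul_add hr, sdig_two_pow_mul_add (by omega),
      ← padicValNat_le_padicValNat_iff_gcd_pow_dvd q.add_one_ne_zero hr0.ne' hr]
    omega

theorem periodic_sdig_le_sdig_add_two_pow_sub_one (k : ℕ) :
    Function.Periodic (fun n => sdig n ≤ sdig (n + (2 ^ k - 1))) (4 ^ k) := by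
  intro n
  obtain ⟨q, r, hr, rfl⟩ : ∃ q r, r < 2 ^ k ∧ n = 2 ^ k * q + r :=
    ⟨n / 2 ^ k, n % 2 ^ k, Nat.mod_lt n (Nat.two_pow_pos k), (Nat.div_add_mod n _).symm⟩
  have hshift : 2 ^ k * q + r + 4 ^ k = 2 ^ k * (q + 2 ^ k) + r := by
    rw [show 4 ^ k = 2 ^ k * 2 ^ k by rw [← Nat.mul_pow]]
    ring
  dsimp only
  rw [hshift, sdig_le_sdig_add_two_pow_sub_one_iff hr, sdig_le_sdig_add_two_pow_sub_one_iff hr,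
    add_right_comm, Nat.gcd_add_self_left]

theorem three_mul_sum_two_pow_div_gcd (k : ℕ) :
    3 * ∑ q ∈ range (2 ^ k), 2 ^ k / (q + 1).gcd (2 ^ k) = 2 * 4 ^ k + 1 := by
  induction k with
  | zero => simp
  | succ k ih =>
    have hodd (i : ℕ) : 2 ^ (k + 1) / (2 * i + 1).gcd (2 ^ (k + 1)) = 2 * 2 ^ k := by
      rw [(Nat.Coprime.pow_right _ (by simp)).gcd_eq_one, Nat.div_one, pow_succ']
    have heven (i : ℕ) :
        2 ^ (k + 1) / (2 * i + 1 + 1).gcd (2 ^ (k + 1)) = 2 ^ k / (i + 1).gcd (2 ^ k) := by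
      rw [pow_succ', show 2 * i + 1 + 1 = 2 * (i + 1) by ring, Nat.gcd_mul_left,
        Nat.mul_div_mul_left _ _ two_pos]
    rw [pow_succ' 2 k, sum_range_mul_eq_sum_sum]
    simp only [sum_range_succ, range_zero, sum_empty, zero_add, add_zero]
    rw [← pow_succ']
    simp only [hodd, heven, sum_add_distrib, sum_const, card_range, smul_eq_mul]
    have h4 : 4 ^ k = 2 ^ k * 2 ^ k := by rw [← Nat.mul_pow]
    rw [h4] at ih
    rw [pow_succ 4 k, h4]
    lia

theorem three_mul_count_sdig_le_sdig_add_two_pow_sub_one (k : ℕ) :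
    3 * Nat.count (fun n => sdig n ≤ sdig (n + (2 ^ k - 1))) (4 ^ k) = 2 * 4 ^ k + 1 := by
  have hblock (q : ℕ) :
      Nat.count (fun r => sdig (2 ^ k * q + r) ≤ sdig (2 ^ k * q + r + (2 ^ k - 1))) (2 ^ k)
        = 2 ^ k / (q + 1).gcd (2 ^ k) := by
    rw [← Nat.count_dvd_of_dvd (Nat.gcd_pos_of_pos_right _ (Nat.two_pow_pos k))
      (Nat.gcd_dvd_right _ _), Nat.count_eq_card_filter_range, Nat.count_eq_card_filter_range]
    congr 1
    exact filter_congr fun r hr => sdig_le_sdig_add_two_pow_sub_one_iff (mem_range.1 hr) q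
  have h4 : 4 ^ k = 2 ^ k * 2 ^ k := by rw [← Nat.mul_pow]
  rw [h4, Nat.count_mul_eq_sum]
  simp only [hblock]
  rw [three_mul_sum_two_pow_div_gcd, h4]

theorem density_one_block_general (k : ℕ) :
    Filter.Tendsto
      (fun M : ℕ =>
        (((Finset.range M).filter (fun n => sdig n ≤ sdig (n + (2 ^ k - 1)))).card : ℝ) / M)
      Filter.atTop (nhds (2 / 3 + 1 / (3 * 4 ^ k))) ∧
    (2 / 3 : ℝ) < 2 / 3 + 1 / (3 * 4 ^ k) := by
  refine ⟨?_, lt_add_of_pos_right _ (by positivity)⟩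
  have hperiod : (Nat.count (fun n => sdig n ≤ sdig (n + (2 ^ k - 1))) (4 ^ k) : ℝ) / (4 ^ k : ℕ)
      = 2 / 3 + 1 / (3 * 4 ^ k) := by
    have h : (3 : ℝ) * Nat.count (fun n => sdig n ≤ sdig (n + (2 ^ k - 1))) (4 ^ k)
        = 2 * 4 ^ k + 1 := by
      exact_mod_cast three_mul_count_sdig_le_sdig_add_two_pow_sub_one k
    push_cast
    field_simp
    linarith
  simp only [← Nat.count_eq_card_filter_range]
  rw [← hperiod]
  exact (periodic_sdig_le_sdig_add_two_pow_sub_one k).tendsto_count_div (by positivity)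

/-- **The case `N = 1` of Cusick's conjecture, with exact density.**
For `k ≥ 1` and `t = 2^k − 1`, the natural density of `{n : s(n+t) ≥ s(n)}` exists and
equals `2/3 + 1/(3·4^k)`, which is strictly greater than `2/3`. -/
theorem density_one_block (k : ℕ) (hk : 1 ≤ k) :
    Filter.Tendsto
      (fun M : ℕ =>
        (((Finset.range M).filter (fun n => sdig n ≤ sdig (n + (2 ^ k - 1)))).card : ℝ) / M)
      Filter.atTop (nhds (2 / 3 + 1 / (3 * 4 ^ k))) ∧
    (2 / 3 : ℝ) < 2 / 3 + 1 / (3 * 4 ^ k) :=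
  density_one_block_general k
end
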